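/- arXiv:2108.13474 — 6 statements merged into one kernel-verified Lean document; each statement's English description precedes it below -/
import Mathlib

section
/- Let μ be a Borel probability measure on ℝ with CDF P(x) = μ((−∞,x]) and let x ∈ [0,1] be a strongly stable fixed point of P. Then for every η > 0 there exists N₀ such that for every N ≥ N₀, in the complete-graph network on N agents (weights g i j = 1 for i ≠ j, so that βᵢ(a) = (1/(N−1))·Σ_{j≠i} a j and Av(a) = (1/N)·Σ_i aᵢ), the μ^⊗N-probability of the set of threshold profiles t for which there exists a pure upper equilibrium a : Fin N → {0,1} with |Av(a) − x| ≤ η is at least 1 − η. -/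
open MeasureTheory Finset

/-- A weighted network on `N` agents. -/
structure Network (N : ℕ) where
  g : Fin N → Fin N → ℝ
  symm : ∀ i j, g i j = g j i
  nonneg : ∀ i j, 0 ≤ g i j
  diag : ∀ i, g i i = 0
  degPos : ∀ i, 0 < ∑ j, g i j

namespace Network

variable {N : ℕ}

/-- Degree of agent `i`. -/
noncomputable def deg (G : Network N) (i : Fin N) : ℝ := ∑ j, G.g i j

/-- Weighted average action `Av`. -/
noncomputable def Av (G : Network N) (a : Fin N → ℝ) : ℝ :=
  (∑ i, G.deg i * a i) / (∑ i, G.deg i)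

/-- Neighborhood average `βᵢ(a)`. -/
noncomputable def nbr (G : Network N) (a : Fin N → ℝ) (i : Fin N) : ℝ :=
  (∑ j, G.g i j * a j) / G.deg i

/-- Weighted distance between profiles. -/
noncomputable def wdist (G : Network N) (a b : Fin N → ℝ) : ℝ :=
  Real.sqrt ((∑ i, (G.deg i) ^ 2 * (a i - b i) ^ 2) / (∑ i, (G.deg i) ^ 2))

/-- Fineness `d(g) = max_{i,j} g i j / gᵢ`. -/
noncomputable def fineness (G : Network N) : ℝ := ⨆ i, ⨆ j, G.g i j / G.deg i

/-- Degree inequality `w(g) = max gᵢ / min gᵢ`. -/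
noncomputable def imbalance (G : Network N) : ℝ := (⨆ i, G.deg i) / (⨅ i, G.deg i)

/-- Balanced network: all degrees equal. -/
def Balanced (G : Network N) : Prop := ∀ i j, G.deg i = G.deg j

end Network

/-- Pure upper equilibrium for threshold profile `t`. -/
def IsUpperEq {N : ℕ} (G : Network N) (t a : Fin N → ℝ) : Prop :=
  (∀ i, a i = 0 ∨ a i = 1) ∧ ∀ i, (a i = 1 ↔ t i ≤ G.nbr a i)

/-- Mixed equilibrium for threshold profile `t`. -/
def IsMixedEq {N : ℕ} (G : Network N) (t a : Fin N → ℝ) : Prop :=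
  (∀ i, a i ∈ Set.Icc (0 : ℝ) 1) ∧
    ∀ i, (t i < G.nbr a i → a i = 1) ∧ (G.nbr a i < t i → a i = 0)

/-- The CDF of a measure. -/
noncomputable def cdf (μ : Measure ℝ) (x : ℝ) : ℝ := (μ (Set.Iic x)).toReal

/-- `x` is a strongly stable fixed point of `P`. -/
def StronglyStable (P : ℝ → ℝ) (x : ℝ) : Prop :=
  P x = x ∧ ∃ γ < (1 : ℝ), ∃ ε > (0 : ℝ), ∀ y ∈ Set.Icc (0 : ℝ) 1, |y - x| ≤ ε →
    (y ≤ x → P x + γ * (y - x) ≤ P y) ∧ (x ≤ y → P y ≤ P x + γ * (y - x))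

/-- The complete graph network on `N ≥ 2` agents: `g i j = 1` for `i ≠ j`. -/
noncomputable def completeNetwork (N : ℕ) (hN : 2 ≤ N) : Network N where
  g i j := if i = j then 0 else 1
  symm := by
    intro i j
    by_cases h : i = j <;> simp [h, eq_comm]
  nonneg := by intro i j; split <;> norm_num
  diag := by intro i; simp
  degPos := by
    intro i
    have key : ∀ j : Fin N, (if i = j then (0 : ℝ) else 1) = 1 - (if i = j then 1 else 0) := by
      intro j; split <;> ring
    rw [Finset.sum_congr rfl fun j _ => key j, Finset.sum_sub_distrib,
      Finset.sum_const, Finset.sum_ite_eq]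
    simp only [Finset.mem_univ, if_true, Finset.card_univ, Fintype.card_fin, nsmul_eq_mul,
      mul_one]
    have : (2 : ℝ) ≤ (N : ℝ) := by exact_mod_cast hN
    linarith

/-!
On the complete graph a `0/1` profile with `k` ones gives agent `i` the neighbourhood average
`(k - aᵢ)/(N - 1)`, so the agents with `tᵢ ≤ (k - 1)/(N - 1)` form an upper equilibrium with `k`
ones as soon as `k ≤ #{tᵢ ≤ (k - 1)/(N - 1)}` and `#{tᵢ ≤ k/(N - 1)} ≤ k`. If the first
inequality holds at `k₁` and the second at `k₂ ≥ k₁`, a discrete intermediate value argument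
yields such a `k` in `[k₁, k₂]`. Strong stability gives `P(x - δ) ≥ x - γδ` and
`P(x + δ) ≤ x + γδ`: a margin `(1 - γ)δ` which, after scaling by `N`, dominates the `O(√N)`
fluctuations of the threshold counts around `N·P(c)` (Chebyshev). So both inequalities hold with
high probability for `k₁ ≈ (x - δ)N` and `k₂ ≈ (x + δ)N`.
-/

open scoped ProbabilityTheory

theorem Nat.exists_mem_Icc_and_of_not_imp_succ {P Q : ℕ → Prop}
    (hPQ : ∀ m, ¬Q m → P (m + 1)) {a b : ℕ} (hab : a ≤ b) (ha : P a) (hb : Q b) :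
    ∃ k ∈ Set.Icc a b, P k ∧ Q k := by
  obtain ⟨d, rfl⟩ := Nat.exists_eq_add_of_le hab
  induction d generalizing a with
  | zero => exact ⟨a, ⟨le_rfl, le_rfl⟩, ha, hb⟩
  | succ d ih =>
    by_cases hQa : Q a
    · exact ⟨a, ⟨le_rfl, by omega⟩, ha, hQa⟩
    · obtain ⟨k, ⟨hak, hkb⟩, hPk, hQk⟩ :=
        ih (hPQ a hQa) (by omega) (by rwa [add_right_comm, add_assoc])
      exact ⟨k, ⟨by omega, by omega⟩, hPk, hQk⟩

theorem one_sub_add_le_measure_of_inter_compl_subset {α : Type*} [MeasurableSpace α]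
    (ν : Measure α) [IsProbabilityMeasure ν] {s A B : Set α} (h : Aᶜ ∩ Bᶜ ⊆ s) :
    1 - (ν A + ν B) ≤ ν s :=
  tsub_le_iff_right.2 <| calc
    1 = ν Set.univ := measure_univ.symm
    _ ≤ ν s + ν sᶜ := measure_univ_le_add_compl s
    _ ≤ ν s + ν (A ∪ B) := by gcongr; exact Set.compl_subset_comm.2 (by rwa [Set.compl_union])
    _ ≤ ν s + (ν A + ν B) := by gcongr; exact measure_union_le A B

theorem measure_le_abs_card_sub_le {ι Ω : Type*} [Fintype ι] [MeasurableSpace Ω]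
    (μ : Measure Ω) [IsProbabilityMeasure μ] {s : Set Ω} [DecidablePred (· ∈ s)]
    (hs : MeasurableSet s) {r : ℝ} (hr : 0 < r) :
    Measure.pi (fun _ : ι => μ)
        {ω | r ≤ |(#{i | ω i ∈ s} : ℝ) - Fintype.card ι * μ.real s|} ≤
      ENNReal.ofReal (Fintype.card ι / (4 * r ^ 2)) := by
  set π := Measure.pi fun _ : ι => μ
  set f : Ω → ℝ := s.indicator 1
  have hf : MemLp f 2 μ := memLp_indicator_const 2 hs 1 (Or.inr (measure_ne_top μ s))
  have hfi : ∀ i, MemLp (fun ω : ι → Ω => f (ω i)) 2 π := fun i =>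
    hf.comp_measurePreserving (measurePreserving_eval _ i)
  set S : (ι → Ω) → ℝ := ∑ i, fun ω => f (ω i)
  have hcount : ∀ ω : ι → Ω, (#{i | ω i ∈ s} : ℝ) = S ω := fun ω => by
    simp [S, f, Set.indicator_apply, Finset.sum_boole]
  have hmean : ∫ ω, S ω ∂π = Fintype.card ι * μ.real s := by
    have hi : ∀ i, ∫ ω, f (ω i) ∂π = μ.real s := fun i => by
      rw [integral_comp_eval (μ := fun _ : ι => μ) hf.aestronglyMeasurable,
        integral_indicator_one hs]
    simp only [S, Finset.sum_apply]
    rw [integral_finsetSum _ fun i _ => (hfi i).integrable one_le_two]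
    simp [hi]
  have hvar : Var[S; π] ≤ Fintype.card ι / 4 := by
    have hf01 : ∀ᵐ y ∂μ, f y ∈ Set.Icc (0 : ℝ) 1 := ae_of_all _ fun y => by
      by_cases hy : y ∈ s <;> simp [f, hy]
    rw [ProbabilityTheory.variance_sum_pi fun _ => hf]
    calc ∑ _i : ι, Var[f; μ] ≤ ∑ _i : ι, ((1 - 0) / 2 : ℝ) ^ 2 := Finset.sum_le_sum fun _ _ =>
          ProbabilityTheory.variance_le_sq_of_bounded hf01 hf.aemeasurable
      _ = Fintype.card ι / 4 := by simp; ring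
  calc π _ = π {ω | r ≤ |S ω - ∫ ω, S ω ∂π|} := by simp_rw [hcount, hmean]
    _ ≤ ENNReal.ofReal (Var[S; π] / r ^ 2) :=
      ProbabilityTheory.meas_ge_le_variance_div_sq (memLp_finsetSum' _ fun i _ => hfi i) hr
    _ ≤ _ := ENNReal.ofReal_le_ofReal <| calc
      _ ≤ (Fintype.card ι / 4 : ℝ) / r ^ 2 := by gcongr
      _ = _ := by ring

theorem cdf_mono (μ : Measure ℝ) [IsFiniteMeasure μ] : Monotone (cdf μ) := fun _ _ h =>
  ENNReal.toReal_mono (measure_ne_top _ _) (measure_mono (Set.Iic_subset_Iic.2 h))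

theorem measure_card_le_lt_le (μ : Measure ℝ) [IsProbabilityMeasure μ] {N k : ℕ} {c r : ℝ}
    (hr : 0 < r) (hk : k + r ≤ N * cdf μ c) :
    Measure.pi (fun _ : Fin N => μ) {t | #{i | t i ≤ c} < k} ≤
      ENNReal.ofReal (N / (4 * r ^ 2)) := by
  refine (measure_mono fun t ht => ?_).trans
    (Fintype.card_fin N ▸ measure_le_abs_card_sub_le μ (measurableSet_Iic (a := c)) hr)
  have ht : (#{i | t i ≤ c} : ℝ) < k := by exact_mod_cast (ht : #{i | t i ≤ c} < k)
  simp only [Set.mem_ofPred_eq, Set.mem_Iic, measureReal_def]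
  exact le_abs.2 (Or.inr (by unfold cdf at hk; linarith))

theorem measure_lt_card_le_le (μ : Measure ℝ) [IsProbabilityMeasure μ] {N k : ℕ} {c r : ℝ}
    (hr : 0 < r) (hk : N * cdf μ c + r ≤ k) :
    Measure.pi (fun _ : Fin N => μ) {t | k < #{i | t i ≤ c}} ≤
      ENNReal.ofReal (N / (4 * r ^ 2)) := by
  refine (measure_mono fun t ht => ?_).trans
    (Fintype.card_fin N ▸ measure_le_abs_card_sub_le μ (measurableSet_Iic (a := c)) hr)
  have ht : (k : ℝ) < #{i | t i ≤ c} := by exact_mod_cast (ht : k < #{i | t i ≤ c})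
  simp only [Set.mem_ofPred_eq, Set.mem_Iic, measureReal_def]
  exact le_abs.2 (Or.inl (by unfold cdf at hk; linarith))

theorem StronglyStable.exists_margin {P : ℝ → ℝ} {x : ℝ} (hss : StronglyStable P x)
    (hx : x ∈ Set.Icc 0 1) :
    ∃ γ < (1 : ℝ), ∃ ε > (0 : ℝ), ∀ δ ∈ Set.Icc 0 ε,
      (0 ≤ x - δ → x - δ + (1 - γ) * δ ≤ P (x - δ)) ∧
        (x + δ ≤ 1 → P (x + δ) + (1 - γ) * δ ≤ x + δ) := by
  obtain ⟨hfix, γ, hγ, ε, hε, hstab⟩ := hss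
  refine ⟨γ, hγ, ε, hε, fun δ ⟨hδ, hδε⟩ => ⟨fun h => ?_, fun h => ?_⟩⟩
  · have := (hstab (x - δ) ⟨h, by linarith [hx.2]⟩
      (by rwa [sub_sub_cancel_left, abs_neg, abs_of_nonneg hδ])).1 (by linarith)
    linarith
  · have := (hstab (x + δ) ⟨by linarith [hx.1], h⟩
      (by rwa [add_sub_cancel_left, abs_of_nonneg hδ])).2 (by linarith)
    linarith

section CompleteNetwork

variable {N : ℕ} (hN : 2 ≤ N)

theorem completeNetwork_deg (i : Fin N) : (completeNetwork N hN).deg i = N - 1 := by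
  simp [Network.deg, completeNetwork, Finset.sum_ite, Finset.filter_ne,
    Nat.cast_sub (by omega : 1 ≤ N)]

theorem completeNetwork_nbr (a : Fin N → ℝ) (i : Fin N) :
    (completeNetwork N hN).nbr a i = ((∑ j, a j) - a i) / (N - 1) := by
  have hii : (completeNetwork N hN).g i i * a i = 0 := by simp [completeNetwork]
  rw [Network.nbr, completeNetwork_deg, ← Finset.sum_erase_eq_sub (Finset.mem_univ i),
    ← Finset.sum_erase (f := fun j => (completeNetwork N hN).g i j * a j) _ hii]
  congr 1
  refine Finset.sum_congr rfl fun j hj => ?_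
  simp [completeNetwork, (Finset.ne_of_mem_erase hj).symm]

theorem completeNetwork_Av (a : Fin N → ℝ) :
    (completeNetwork N hN).Av a = (∑ i, a i) / N := by
  have hN1 : (N : ℝ) - 1 ≠ 0 := by
    have : (2 : ℝ) ≤ N := by exact_mod_cast hN
    linarith
  simp only [Network.Av, completeNetwork_deg, ← Finset.mul_sum, Finset.sum_const,
    Finset.card_univ, Fintype.card_fin, nsmul_eq_mul]
  rw [mul_comm (N : ℝ), mul_div_mul_left _ _ hN1]

theorem exists_isUpperEq_completeNetwork {t : Fin N → ℝ} {k : ℕ}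
    (hlow : k ≤ #{i | t i ≤ ((k : ℝ) - 1) / (N - 1)})
    (hup : #{i | t i ≤ (k : ℝ) / (N - 1)} ≤ k) :
    ∃ a, IsUpperEq (completeNetwork N hN) t a ∧ ∑ i, a i = k := by
  set A : Finset (Fin N) := {i | t i ≤ ((k : ℝ) - 1) / (N - 1)}
  have hN1 : (0 : ℝ) < N - 1 := by
    have : (2 : ℝ) ≤ N := by exact_mod_cast hN
    linarith
  have hAB : A = ({i | t i ≤ (k : ℝ) / (N - 1)} : Finset (Fin N)) :=
    Finset.eq_of_subset_of_card_le (fun i hi => Finset.mem_filter.2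
      ⟨Finset.mem_univ i, (Finset.mem_filter.1 hi).2.trans (by gcongr; linarith)⟩)
      (hup.trans hlow)
  have hsum : ∑ i, (if i ∈ A then (1 : ℝ) else 0) = k := by
    rw [Finset.sum_boole, Finset.filter_mem_eq_inter, Finset.univ_inter,
      le_antisymm (hAB ▸ hup) hlow]
  refine ⟨fun i => if i ∈ A then 1 else 0, ⟨fun i => by by_cases hi : i ∈ A <;> simp [hi],
    fun i => ?_⟩, hsum⟩
  rw [completeNetwork_nbr, hsum]
  by_cases hi : i ∈ A
  · have ht : t i ≤ ((k : ℝ) - 1) / (N - 1) := (Finset.mem_filter.1 hi).2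
    simp [hi, ht]
  · have ht : ¬t i ≤ (k : ℝ) / (N - 1) := fun ht =>
      hi (hAB ▸ Finset.mem_filter.2 ⟨Finset.mem_univ i, ht⟩)
    simp [hi, ht]

theorem exists_isUpperEq_completeNetwork_of_cuts {t : Fin N → ℝ} {k₁ k₂ : ℕ} (hk : k₁ ≤ k₂)
    (h₁ : k₁ ≤ #{i | t i ≤ ((k₁ : ℝ) - 1) / (N - 1)})
    (h₂ : #{i | t i ≤ (k₂ : ℝ) / (N - 1)} ≤ k₂) :
    ∃ a, IsUpperEq (completeNetwork N hN) t a ∧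
      (completeNetwork N hN).Av a ∈ Set.Icc ((k₁ : ℝ) / N) (k₂ / N) := by
  obtain ⟨k, hk, hlow, hup⟩ := Nat.exists_mem_Icc_and_of_not_imp_succ
    (P := fun k => k ≤ #{i | t i ≤ ((k : ℝ) - 1) / (N - 1)})
    (Q := fun k => #{i | t i ≤ (k : ℝ) / (N - 1)} ≤ k)
    (fun m hm => by push_cast; simpa using hm) hk h₁ h₂
  obtain ⟨a, ha, hsum⟩ := exists_isUpperEq_completeNetwork hN hlow hup
  refine ⟨a, ha, ?_⟩
  rw [completeNetwork_Av, hsum]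
  exact ⟨by gcongr; exact_mod_cast hk.1, by gcongr; exact_mod_cast hk.2⟩

end CompleteNetwork

section Cuts

variable (μ : Measure ℝ) [IsProbabilityMeasure μ] {x δ m : ℝ} (hx : x ∈ Set.Icc 0 1)
  (hm : 0 < m) {N : ℕ} (hN : 2 ≤ N) (hδN : 2 ≤ δ * N) (hmN : 4 ≤ m * N)
include hx hm hN hδN hmN

theorem exists_lower_cut (hlow : 0 ≤ x - δ → x - δ + m ≤ cdf μ (x - δ)) :
    ∃ k : ℕ, (x - δ) * N ≤ k ∧ (k : ℝ) ≤ x * N ∧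
      Measure.pi (fun _ : Fin N => μ) {t | #{i | t i ≤ ((k : ℝ) - 1) / (N - 1)} < k} ≤
        ENNReal.ofReal (1 / m ^ 2 / N) := by
  have hN' : (2 : ℝ) ≤ N := by exact_mod_cast hN
  rcases lt_or_ge (x - δ) 0 with hneg | hpos
  · refine ⟨0, by push_cast; nlinarith, by push_cast; nlinarith [hx.1], ?_⟩
    exact (measure_mono_null (fun t ht => absurd ht (Nat.not_lt_zero _)) measure_empty).trans_le
      bot_le
  set k := ⌈(x - δ) * (N - 1)⌉₊ + 1
  have hk_lt : (k : ℝ) < (x - δ) * (N - 1) + 2 := by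
    have := Nat.ceil_lt_add_one (mul_nonneg hpos (by linarith : (0 : ℝ) ≤ N - 1))
    push_cast [k]; linarith
  have hk_ge : (x - δ) * (N - 1) + 1 ≤ k := by
    have := Nat.le_ceil ((x - δ) * (N - 1))
    push_cast [k]; linarith
  have hcut : x - δ ≤ ((k : ℝ) - 1) / (N - 1) := by
    rw [le_div_iff₀ (by linarith)]; linarith
  have hcdf : x - δ + m ≤ cdf μ (((k : ℝ) - 1) / (N - 1)) := (hlow hpos).trans (cdf_mono μ hcut)
  refine ⟨k, by nlinarith [hx.2], by nlinarith, ?_⟩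
  refine (measure_card_le_lt_le μ (r := m * N / 2) (by positivity) ?_).trans
    (le_of_eq (congrArg ENNReal.ofReal (by field_simp; ring)))
  nlinarith

theorem exists_upper_cut (hup : x + δ ≤ 1 → cdf μ (x + δ) + m ≤ x + δ) :
    ∃ k : ℕ, x * N ≤ k ∧ (k : ℝ) ≤ (x + δ) * N ∧
      Measure.pi (fun _ : Fin N => μ) {t | k < #{i | t i ≤ (k : ℝ) / (N - 1)}} ≤
        ENNReal.ofReal (1 / m ^ 2 / N) := by
  have hN' : (2 : ℝ) ≤ N := by exact_mod_cast hN
  have hδ : 0 < δ := by nlinarith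
  rcases lt_or_ge 1 (x + δ) with hgt | hle
  · refine ⟨N, by nlinarith [hx.2], by nlinarith, ?_⟩
    have hcard : ∀ t : Fin N → ℝ, #{i | t i ≤ (N : ℝ) / (N - 1)} ≤ N := fun t =>
      (Finset.card_le_univ _).trans_eq (Fintype.card_fin N)
    exact (measure_mono_null (fun t ht => absurd ht (hcard t).not_gt) measure_empty).trans_le
      bot_le
  set k := ⌊(x + δ) * (N - 1)⌋₊
  have hk_gt : (x + δ) * (N - 1) - 1 < k := by
    have := Nat.lt_floor_add_one ((x + δ) * (N - 1))
    linarith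
  have hk_le : (k : ℝ) ≤ (x + δ) * (N - 1) :=
    Nat.floor_le (mul_nonneg (by linarith [hx.1]) (by linarith))
  have hcut : (k : ℝ) / (N - 1) ≤ x + δ := by
    rw [div_le_iff₀ (by linarith)]; exact hk_le
  have hcdf : cdf μ ((k : ℝ) / (N - 1)) + m ≤ x + δ := by linarith [hup hle, cdf_mono μ hcut]
  refine ⟨k, by nlinarith [hx.2], by nlinarith [hx.1], ?_⟩
  refine (measure_lt_card_le_le μ (r := m * N / 2) (by positivity) ?_).trans
    (le_of_eq (congrArg ENNReal.ofReal (by field_simp; ring)))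
  nlinarith [hx.2]

theorem one_sub_le_measure_exists_isUpperEq_completeNetwork
    (hlow : 0 ≤ x - δ → x - δ + m ≤ cdf μ (x - δ))
    (hup : x + δ ≤ 1 → cdf μ (x + δ) + m ≤ x + δ) :
    1 - ENNReal.ofReal (2 / m ^ 2 / N) ≤ Measure.pi (fun _ : Fin N => μ)
      {t | ∃ a, IsUpperEq (completeNetwork N hN) t a ∧ |(completeNetwork N hN).Av a - x| ≤ δ} := by
  obtain ⟨k₁, hk₁, hk₁x, hbad₁⟩ := exists_lower_cut μ hx hm hN hδN hmN hlow
  obtain ⟨k₂, hk₂x, hk₂, hbad₂⟩ := exists_upper_cut μ hx hm hN hδN hmN hup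
  have hN0 : (0 : ℝ) < N := by positivity
  calc 1 - ENNReal.ofReal (2 / m ^ 2 / N)
      = 1 - (ENNReal.ofReal (1 / m ^ 2 / N) + ENNReal.ofReal (1 / m ^ 2 / N)) := by
        rw [← ENNReal.ofReal_add (by positivity) (by positivity)]; ring_nf
    _ ≤ 1 - (Measure.pi (fun _ : Fin N => μ) {t | #{i | t i ≤ ((k₁ : ℝ) - 1) / (N - 1)} < k₁} +
          Measure.pi (fun _ : Fin N => μ) {t | k₂ < #{i | t i ≤ (k₂ : ℝ) / (N - 1)}}) := by
        gcongr
    _ ≤ _ := one_sub_add_le_measure_of_inter_compl_subset _ fun t ⟨h₁, h₂⟩ => by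
        obtain ⟨a, ha, hAv₁, hAv₂⟩ := exists_isUpperEq_completeNetwork_of_cuts hN
          (by exact_mod_cast hk₁x.trans hk₂x) (not_lt.1 h₁) (not_lt.1 h₂)
        have : x - δ ≤ (k₁ : ℝ) / N := (le_div_iff₀ hN0).2 hk₁
        have : (k₂ : ℝ) / N ≤ x + δ := (div_le_iff₀ hN0).2 hk₂
        exact ⟨a, ha, abs_le.2 ⟨by linarith, by linarith⟩⟩

end Cuts

/-- **Theorem 1, complete graphs.** If `x` is a strongly stable fixed point
of the CDF `P` of `μ`, then for every `η > 0`, on all sufficiently large complete graphs,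
with probability at least `1 − η` there is a pure upper equilibrium whose average is
within `η` of `x`. -/
theorem complete_graph_equilibrium (μ : Measure ℝ) [IsProbabilityMeasure μ] (x : ℝ)
    (hx : x ∈ Set.Icc (0 : ℝ) 1) (hss : StronglyStable (cdf μ) x) :
    ∀ η > (0 : ℝ), ∃ N₀ : ℕ, ∀ N : ℕ, ∀ hN : N₀ + 2 ≤ N,
      ENNReal.ofReal (1 - η) ≤
        (Measure.pi fun _ : Fin N => μ)
          {t | ∃ a : Fin N → ℝ,
            IsUpperEq (completeNetwork N (by omega)) t a ∧
            |(completeNetwork N (by omega)).Av a - x| ≤ η} := by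
  intro η hη
  obtain ⟨γ, hγ, ε, hε, hmargin⟩ := hss.exists_margin hx
  set δ := min ε η
  have hδ : 0 < δ := lt_min hε hη
  have hm : 0 < (1 - γ) * δ := mul_pos (by linarith) hδ
  obtain ⟨hlow, hup⟩ := hmargin δ ⟨hδ.le, min_le_left _ _⟩
  have hnat := tendsto_natCast_atTop_atTop (R := ℝ)
  obtain ⟨N₀, hN₀⟩ := Filter.eventually_atTop.1 <|
    ((hnat.const_mul_atTop hδ).eventually_ge_atTop 2).and <|
      ((hnat.const_mul_atTop hm).eventually_ge_atTop 4).and <|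
        (tendsto_const_div_atTop_nhds_zero_nat (2 / ((1 - γ) * δ) ^ 2)).eventually
          (eventually_le_nhds hη)
  refine ⟨N₀, fun N hN => ?_⟩
  obtain ⟨hδN, hmN, hηN⟩ := hN₀ N (by omega)
  calc ENNReal.ofReal (1 - η)
      ≤ 1 - ENNReal.ofReal (2 / ((1 - γ) * δ) ^ 2 / N) := by
        rw [← ENNReal.ofReal_one, ← ENNReal.ofReal_sub _ (by positivity)]
        exact ENNReal.ofReal_le_ofReal (by linarith)
    _ ≤ _ := one_sub_le_measure_exists_isUpperEq_completeNetwork μ hx hm (by omega) hδN hmN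
        hlow hup
    _ ≤ _ := measure_mono fun t ⟨a, ha, hAv⟩ => ⟨a, ha, hAv.trans (min_le_right _ _)⟩
end

section
/- For every network g on N agents and all profiles a, b : Fin N → ℝ, |Av(a) − Av(b)| ≤ sqrt(w(g)) · dist(a, b). -/
open MeasureTheory Finset

/-- `|Av(a) − Av(b)| ≤ sqrt(w(g)) · dist(a, b)`. -/
theorem abs_av_sub_av_le {N : ℕ} (G : Network N) (a b : Fin N → ℝ) :
    |G.Av a - G.Av b| ≤ Real.sqrt G.imbalance * G.wdist a b := by
  rcases Nat.eq_zero_or_pos N with hN | hN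
  · subst hN
    simp [Network.Av, Network.wdist, Network.imbalance, Real.sqrt_nonneg]
  · have hne : Nonempty (Fin N) := ⟨⟨0, hN⟩⟩
    set d := G.deg with hd
    have hdpos : ∀ i, 0 < d i := G.degPos
    set c : Fin N → ℝ := fun i => a i - b i with hc
    set S := ∑ i, d i with hS
    set Q := ∑ i, (d i) ^ 2 with hQ
    set T := ∑ i, (d i) ^ 2 * (c i) ^ 2 with hT
    have hSpos : 0 < S := Finset.sum_pos (fun i _ => hdpos i) Finset.univ_nonempty
    have hQpos : 0 < Q := Finset.sum_pos (fun i _ => pow_pos (hdpos i) 2) Finset.univ_nonempty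
    have hTnn : 0 ≤ T := Finset.sum_nonneg fun i _ => by positivity
    obtain ⟨i0, hi0⟩ := Finite.exists_min d
    have hbddA : BddAbove (Set.range d) := (Set.finite_range d).bddAbove
    have hbddB : BddBelow (Set.range d) := (Set.finite_range d).bddBelow
    set M := ⨆ i, d i with hM
    set m := ⨅ i, d i with hm
    have hmle : ∀ i, m ≤ d i := fun i => ciInf_le hbddB i
    have hMle : ∀ i, d i ≤ M := fun i => le_ciSup hbddA i
    have hmpos : 0 < m := lt_of_lt_of_le (hdpos i0) (le_ciInf hi0)
    have hMpos : 0 < M := lt_of_lt_of_le (hdpos i0) (hMle i0)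
    -- Cauchy–Schwarz
    have hCS : (∑ i, d i * c i) ^ 2 ≤ (N : ℝ) * T := by
      have h := sq_sum_le_card_mul_sum_sq (s := Finset.univ) (f := fun i => d i * c i)
      simpa [mul_pow, Finset.card_univ] using h
    have h1 : Q ≤ M * S := by
      rw [hQ, hS, Finset.mul_sum]
      exact Finset.sum_le_sum fun i _ => by
        rw [sq]; exact mul_le_mul_of_nonneg_right (hMle i) (hdpos i).le
    have h2 : (N : ℝ) * m ≤ S := by
      have := Finset.sum_le_sum (s := (Finset.univ : Finset (Fin N)))
        (f := fun _ => m) (g := d) (fun i _ => hmle i)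
      simpa [Finset.card_univ, mul_comm] using this
    have key : (∑ i, d i * c i) ^ 2 / S ^ 2 ≤ (M / m) * (T / Q) := by
      rw [div_mul_div_comm, div_le_div_iff₀ (by positivity) (by positivity)]
      calc (∑ i, d i * c i) ^ 2 * (m * Q)
          ≤ ((N : ℝ) * T) * (m * Q) :=
            mul_le_mul_of_nonneg_right hCS (by positivity)
        _ = (T * Q) * ((N : ℝ) * m) := by ring
        _ ≤ (T * Q) * S := mul_le_mul_of_nonneg_left h2 (by positivity)
        _ = (T * S) * Q := by ring
        _ ≤ (T * S) * (M * S) := mul_le_mul_of_nonneg_left h1 (by positivity)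
        _ = M * T * S ^ 2 := by ring
    have hdiff : G.Av a - G.Av b = (∑ i, d i * c i) / S := by
      rw [Network.Av, Network.Av, div_sub_div_same]
      congr 1
      rw [← Finset.sum_sub_distrib]
      exact Finset.sum_congr rfl fun i _ => by rw [hc]; ring
    have habs : |G.Av a - G.Av b| = Real.sqrt ((∑ i, d i * c i) ^ 2 / S ^ 2) := by
      rw [hdiff, ← Real.sqrt_sq_eq_abs, div_pow]
    have himb : G.imbalance = M / m := rfl
    have hw : G.wdist a b = Real.sqrt (T / Q) := rfl
    rw [habs, himb, hw, ← Real.sqrt_mul (by positivity : (0:ℝ) ≤ M / m)]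
    exact Real.sqrt_le_sqrt key
end

section
/- Let g be a network on N agents, let x_max ∈ ℝ, and let b : Fin N → ℝ be a profile with bᵢ ≥ x_max for every i. Then for every profile a : Fin N → ℝ, (1/Σᵢ gᵢ) · Σᵢ gᵢ · max(x_max − aᵢ, 0) ≤ sqrt(w(g)) · dist(a, b). -/
open MeasureTheory Finset

/-- If `bᵢ ≥ x_max` for all `i`, then the degree-weighted average
shortfall of `a` below `x_max` is bounded by `sqrt(w(g)) · dist(a,b)`. -/
theorem shortfall_le {N : ℕ} (G : Network N) (xmax : ℝ) (b : Fin N → ℝ)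
    (hb : ∀ i, xmax ≤ b i) (a : Fin N → ℝ) :
    (1 / ∑ i, G.deg i) * ∑ i, G.deg i * max (xmax - a i) 0 ≤
      Real.sqrt G.imbalance * G.wdist a b := by
  rcases Nat.eq_zero_or_pos N with h0 | hN
  · subst h0
    simp [Network.wdist]
  haveI : Nonempty (Fin N) := Fin.pos_iff_nonempty.mp hN
  have hdegpos : ∀ i, 0 < G.deg i := fun i => G.degPos i
  set S := ∑ i, G.deg i with hSdef
  set Q := ∑ i, (G.deg i) ^ 2 with hQdef
  set T := ∑ i, (G.deg i) ^ 2 * (a i - b i) ^ 2 with hTdef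
  have hSpos : 0 < S := Finset.sum_pos (fun i _ => hdegpos i) Finset.univ_nonempty
  have hQpos : 0 < Q := Finset.sum_pos (fun i _ => pow_pos (hdegpos i) 2) Finset.univ_nonempty
  have hTnn : 0 ≤ T := Finset.sum_nonneg fun i _ => mul_nonneg (sq_nonneg _) (sq_nonneg _)
  set M := ⨆ i, G.deg i with hMdef
  set m := ⨅ i, G.deg i with hmdef
  have hbdd : BddAbove (Set.range G.deg) := (Set.finite_range _).bddAbove
  have hbddb : BddBelow (Set.range G.deg) := (Set.finite_range _).bddBelow
  have hMle : ∀ i, G.deg i ≤ M := fun i => le_ciSup hbdd i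
  have hmle : ∀ i, m ≤ G.deg i := fun i => ciInf_le hbddb i
  have hmpos : 0 < m := by
    obtain ⟨i₀, hi₀⟩ := Finite.exists_min G.deg
    exact lt_of_lt_of_le (hdegpos i₀) (le_ciInf hi₀)
  have hMpos : 0 < M := by
    obtain ⟨i⟩ := (inferInstance : Nonempty (Fin N))
    exact lt_of_lt_of_le hmpos ((hmle i).trans (hMle i))
  set c : Fin N → ℝ := fun i => max (xmax - a i) 0 with hcdef
  have hcnn : ∀ i, 0 ≤ c i := fun i => le_max_right _ _
  have hcle : ∀ i, c i ≤ |a i - b i| := by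
    intro i
    apply max_le _ (abs_nonneg _)
    calc xmax - a i ≤ b i - a i := by linarith [hb i]
      _ ≤ |b i - a i| := le_abs_self _
      _ = |a i - b i| := abs_sub_comm _ _
  -- key sums
  have hsum_nn : 0 ≤ ∑ i, G.deg i * c i :=
    Finset.sum_nonneg fun i _ => mul_nonneg (hdegpos i).le (hcnn i)
  have hCS : (∑ i, G.deg i * c i) ^ 2 ≤ (N : ℝ) * T := by
    calc (∑ i, G.deg i * c i) ^ 2
        ≤ (Finset.univ.card : ℝ) * ∑ i, (G.deg i * c i) ^ 2 :=
          sq_sum_le_card_mul_sum_sq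
      _ = (N : ℝ) * ∑ i, (G.deg i) ^ 2 * (c i) ^ 2 := by
          simp [Finset.card_univ, mul_pow]
      _ ≤ (N : ℝ) * T := by
          apply mul_le_mul_of_nonneg_left _ (Nat.cast_nonneg N)
          apply Finset.sum_le_sum
          intro i _
          apply mul_le_mul_of_nonneg_left _ (sq_nonneg _)
          calc (c i) ^ 2 ≤ |a i - b i| ^ 2 := by
                have := hcle i; have := hcnn i; nlinarith
            _ = (a i - b i) ^ 2 := sq_abs _
  have hQMS : Q ≤ M * S := by
    rw [hQdef, hSdef, Finset.mul_sum]
    apply Finset.sum_le_sum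
    intro i _
    have := hMle i
    nlinarith [hdegpos i]
  have hNmS : (N : ℝ) * m ≤ S := by
    calc (N : ℝ) * m = ∑ _i : Fin N, m := by simp [mul_comm]
      _ ≤ S := Finset.sum_le_sum fun i _ => hmle i
  have hkey : (N : ℝ) * Q * m ≤ M * S ^ 2 := by
    have hNnn : (0:ℝ) ≤ N := Nat.cast_nonneg N
    nlinarith [mul_le_mul_of_nonneg_left hQMS hNnn,
      mul_le_mul_of_nonneg_right hNmS (mul_nonneg hMpos.le hSpos.le)]
  -- now compare squares
  have hLnn : 0 ≤ (1 / S) * ∑ i, G.deg i * c i :=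
    mul_nonneg (by positivity) hsum_nn
  have himb : G.imbalance = M / m := rfl
  have himbnn : 0 ≤ G.imbalance := by rw [himb]; positivity
  have hwd : G.wdist a b = Real.sqrt (T / Q) := rfl
  have hRHS : Real.sqrt G.imbalance * G.wdist a b = Real.sqrt ((M / m) * (T / Q)) := by
    rw [himb, hwd, ← Real.sqrt_mul (by positivity)]
  have hsq : ((1 / S) * ∑ i, G.deg i * c i) ^ 2 ≤ (M / m) * (T / Q) := by
    have h1 : ((1 / S) * ∑ i, G.deg i * c i) ^ 2
        = (∑ i, G.deg i * c i) ^ 2 / S ^ 2 := by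
      field_simp
    rw [h1]
    rw [div_le_iff₀ (by positivity)]
    calc (∑ i, G.deg i * c i) ^ 2 ≤ (N : ℝ) * T := hCS
      _ ≤ (M / m) * (T / Q) * S ^ 2 := by
          rw [show (M / m) * (T / Q) * S ^ 2 = M * T * S ^ 2 / (m * Q) from by ring,
            le_div_iff₀ (by positivity)]
          nlinarith [mul_le_mul_of_nonneg_right hkey hTnn]
  calc (1 / S) * ∑ i, G.deg i * c i
      = Real.sqrt (((1 / S) * ∑ i, G.deg i * c i) ^ 2) := (Real.sqrt_sq hLnn).symm
    _ ≤ Real.sqrt ((M / m) * (T / Q)) := Real.sqrt_le_sqrt hsq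
    _ = Real.sqrt G.imbalance * G.wdist a b := hRHS.symm
end

section
/- Let μ be a Borel probability measure on ℝ whose CDF P(x) = μ((−∞,x]) is Lipschitz with constant 1. Let g be a network on N agents, let a₀ : Fin N → [0,1] be a profile, and let η, δ > 0 satisfy η² ≥ 3·δ^{2/3}. Let t₁,…,t_N be i.i.d. random variables with law μ, and for each profile a : Fin N → [0,1] define the random pure profile b(a) by b(a)_j = 1 if t_j ≤ β_j(a) and b(a)_j = 0 otherwise. Then Prob( sup{ dist(b(a₀), b(a)) : a : Fin N → [0,1] with dist(β(a), β(a₀)) ≤ δ } ≥ η ) ≤ exp( −N·(η² − 3·δ^{2/3})² / (2·w(g)⁴) ). -/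
/-!
Fix `ε = δ^{2/3}`. When `β(a)` is `δ`-close to `β(a₀)`, agent `j` responds differently to `a` and
to `a₀` only if `tⱼ` lies between `βⱼ(a₀)` and `βⱼ(a)`: either `|βⱼ(a) - βⱼ(a₀)| > ε`, paid for by
`(βⱼ(a) - βⱼ(a₀))² / ε² ≥ 1`, or `tⱼ` lies in the window `(βⱼ(a₀) - ε, βⱼ(a₀) + ε]`. With the
weights `gⱼ² / Σ gᵢ²` of the distance, the squared response distance is thus at most the weighted
count of thresholds in their windows plus `δ² / ε² = ε`, uniformly in `a`. A `1`-Lipschitz CDF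
gives each window probability at most `2ε`, so the event forces this weighted sum of independent
indicators to exceed its mean by `η² - 3ε`. Hoeffding's inequality bounds the probability of that
by `exp (-2 (η² - 3ε)² / Σ weight²)`, and `N · Σ weight² ≤ w(g)²`.
-/

open MeasureTheory Finset

lemma sq_div_sq_rpow_two_div_three {δ : ℝ} (hδ : 0 < δ) :
    δ ^ 2 / (δ ^ ((2 : ℝ) / 3)) ^ 2 = δ ^ ((2 : ℝ) / 3) := by
  have hcube : (δ ^ ((2 : ℝ) / 3)) ^ 3 = δ ^ 2 := by
    rw [← Real.rpow_natCast, ← Real.rpow_mul hδ.le]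
    norm_num
  have : 0 < δ ^ ((2 : ℝ) / 3) := by positivity
  rw [← hcube]
  field_simp

lemma measureReal_Ioc_le_of_lipschitzWith_cdf {μ : Measure ℝ} [IsFiniteMeasure μ]
    (hLip : LipschitzWith 1 (cdf μ)) {x y : ℝ} (hxy : x ≤ y) :
    μ.real (Set.Ioc x y) ≤ y - x := by
  rw [← Set.Iic_sdiff_Iic, measureReal_sdiff (Set.Iic_subset_Iic.2 hxy) measurableSet_Iic]
  have h := hLip.dist_le_mul y x
  rw [Real.dist_eq, Real.dist_eq, NNReal.coe_one, one_mul, abs_of_nonneg (sub_nonneg.2 hxy)] at h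
  exact (le_abs_self _).trans h

open ProbabilityTheory in
theorem measureReal_sum_mul_indicator_sub_ge_le {ι : Type*} [Fintype ι] {Ω : ι → Type*}
    [∀ i, MeasurableSpace (Ω i)] (μ : ∀ i, Measure (Ω i)) [∀ i, IsProbabilityMeasure (μ i)]
    {A : ∀ i, Set (Ω i)} (hA : ∀ i, MeasurableSet (A i)) {c : ι → ℝ} (hc : ∀ i, 0 ≤ c i)
    {s : ℝ} (hs : 0 ≤ s) :
    (Measure.pi μ).real {ω | s ≤ ∑ i, c i * ((A i).indicator 1 (ω i) - (μ i).real (A i))} ≤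
      Real.exp (-2 * s ^ 2 / ∑ i, c i ^ 2) := by
  set Y : ∀ i, Ω i → ℝ := fun i x => c i * (A i).indicator 1 x
  have hY : ∀ i, Measurable (Y i) := fun i => (measurable_const.indicator (hA i)).const_mul _
  have hmean : ∀ i, ∫ x, Y i x ∂μ i = c i * (μ i).real (A i) := fun i => by
    simp [Y, integral_const_mul, integral_indicator_one (hA i)]
  have hsubG : ∀ i ∈ (univ : Finset ι),
      HasSubgaussianMGF (fun ω : ∀ j, Ω j => Y i (ω i) - ∫ x, Y i x ∂μ i)
        ((‖c i - 0‖₊ / 2) ^ 2) (Measure.pi μ) := by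
    intro i _
    refine HasSubgaussianMGF.of_map (Y := fun ω : ∀ j, Ω j => ω i)
      (X := fun x => Y i x - ∫ x, Y i x ∂μ i) (measurable_pi_apply i).aemeasurable ?_
    rw [(measurePreserving_eval μ i).map_eq]
    refine hasSubgaussianMGF_of_mem_Icc (hY i).aemeasurable (ae_of_all _ fun x => ?_)
    by_cases hx : x ∈ A i <;> simp [Y, hx, hc i]
  have h := HasSubgaussianMGF.measure_sum_ge_le_of_iIndepFun
    (iIndepFun_pi fun i => ((hY i).sub_const (∫ x, Y i x ∂μ i)).aemeasurable) hsubG hs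
  have hsum : ∀ ω : ∀ i, Ω i, ∑ i, (Y i (ω i) - ∫ x, Y i x ∂μ i) =
      ∑ i, c i * ((A i).indicator 1 (ω i) - (μ i).real (A i)) := fun ω => by
    simp only [hmean, Y, mul_sub]
  have hparam : (2 * ((∑ i, (‖c i - 0‖₊ / 2) ^ 2 : NNReal) : ℝ)) = (∑ i, c i ^ 2) / 2 := by
    push_cast
    simp only [sub_zero, Real.norm_eq_abs, sq_abs, div_pow, ← Finset.sum_div]
    ring
  simp only [hsum, hparam] at h
  refine h.trans_eq ?_
  congr 1
  field_simp

lemma sq_ite_sub_ite_le_indicator_Ioc_add {x y z ε : ℝ} (hε : 0 < ε) :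
    ((if x ≤ y then 1 else 0) - (if x ≤ z then 1 else 0) : ℝ) ^ 2 ≤
      (Set.Ioc (y - ε) (y + ε)).indicator 1 x + (z - y) ^ 2 / ε ^ 2 := by
  have hind : 0 ≤ (Set.Ioc (y - ε) (y + ε)).indicator (1 : ℝ → ℝ) x :=
    Set.indicator_nonneg (fun _ _ => zero_le_one) x
  by_cases hzy : |z - y| ≤ ε
  · obtain ⟨hzl, hzr⟩ := abs_le.1 hzy
    have hq : 0 ≤ (z - y) ^ 2 / ε ^ 2 := by positivity
    split_ifs with hxy hxz hxz <;> norm_num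
    · positivity
    · rw [Set.indicator_of_mem (Set.mem_Ioc.2 ⟨by linarith, hxy.trans (by linarith)⟩)]
      norm_num; positivity
    · rw [Set.indicator_of_mem (Set.mem_Ioc.2 ⟨by linarith, by linarith⟩)]
      norm_num; positivity
    · positivity
  · have hq : 1 ≤ (z - y) ^ 2 / ε ^ 2 := by
      rw [one_le_div (by positivity), ← sq_abs (z - y)]
      exact pow_le_pow_left₀ hε.le (le_of_not_ge hzy) 2
    split_ifs <;> norm_num <;> linarith

noncomputable def thresholdResponse {N : ℕ} (t β : Fin N → ℝ) : Fin N → ℝ :=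
  fun j => if t j ≤ β j then 1 else 0

namespace Network

variable {N : ℕ} (G : Network N)

noncomputable def weight (i : Fin N) : ℝ := G.deg i ^ 2 / ∑ j, G.deg j ^ 2

noncomputable def supResponseDist (a₀ : Fin N → ℝ) (δ : ℝ) (t : Fin N → ℝ) : ℝ :=
  sSup {r : ℝ | ∃ a : Fin N → ℝ, (∀ i, a i ∈ Set.Icc (0 : ℝ) 1) ∧
    G.wdist (G.nbr a) (G.nbr a₀) ≤ δ ∧
    r = G.wdist (thresholdResponse t (G.nbr a₀)) (thresholdResponse t (G.nbr a))}

lemma deg_pos (i : Fin N) : 0 < G.deg i := G.degPos i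

lemma sum_deg_sq_pos [Nonempty (Fin N)] : 0 < ∑ j, G.deg j ^ 2 :=
  sum_pos (fun j _ => pow_pos (G.deg_pos j) 2) univ_nonempty

lemma weight_pos (i : Fin N) : 0 < G.weight i :=
  have : Nonempty (Fin N) := ⟨i⟩
  div_pos (pow_pos (G.deg_pos i) 2) G.sum_deg_sq_pos

lemma sum_weight [Nonempty (Fin N)] : ∑ i, G.weight i = 1 := by
  simp only [weight, ← sum_div]
  exact div_self G.sum_deg_sq_pos.ne'

lemma wdist_sq (a b : Fin N → ℝ) : G.wdist a b ^ 2 = ∑ i, G.weight i * (a i - b i) ^ 2 := by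
  rw [wdist, Real.sq_sqrt (div_nonneg (sum_nonneg fun i _ => by positivity) (by positivity)),
    sum_div]
  exact sum_congr rfl fun i _ => by rw [weight]; ring

lemma one_le_imbalance [Nonempty (Fin N)] : 1 ≤ G.imbalance := by
  obtain ⟨i, hi⟩ := exists_eq_ciInf_of_finite (f := G.deg)
  rw [imbalance, ← hi, one_le_div (G.deg_pos i)]
  exact le_ciSup (Set.finite_range _).bddAbove i

lemma natCast_mul_weight_le (i : Fin N) : N * G.weight i ≤ G.imbalance ^ 2 := by
  have : Nonempty (Fin N) := ⟨i⟩
  obtain ⟨k, hk⟩ := exists_eq_ciInf_of_finite (f := G.deg)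
  have hdeg : G.deg i ≤ ⨆ j, G.deg j := le_ciSup (Set.finite_range _).bddAbove i
  have hmin : ∀ j, G.deg k ^ 2 ≤ G.deg j ^ 2 := fun j =>
    pow_le_pow_left₀ (G.deg_pos k).le (hk ▸ ciInf_le (Set.finite_range _).bddBelow j) 2
  have hS : N * G.deg k ^ 2 ≤ ∑ j, G.deg j ^ 2 := by
    simpa using card_nsmul_le_sum univ (fun j => G.deg j ^ 2) _ fun j _ => hmin j
  rw [weight, imbalance, ← hk, div_pow, mul_div_assoc',
    div_le_div_iff₀ G.sum_deg_sq_pos (pow_pos (G.deg_pos k) 2)]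
  calc N * G.deg i ^ 2 * G.deg k ^ 2 = G.deg i ^ 2 * (N * G.deg k ^ 2) := by ring
    _ ≤ (⨆ j, G.deg j) ^ 2 * ∑ j, G.deg j ^ 2 := by
      gcongr
      exact (G.deg_pos i).le

lemma natCast_mul_sum_weight_sq_le [Nonempty (Fin N)] :
    N * ∑ i, G.weight i ^ 2 ≤ G.imbalance ^ 2 :=
  calc N * ∑ i, G.weight i ^ 2 = ∑ i, G.weight i * (N * G.weight i) := by
        rw [mul_sum]; exact sum_congr rfl fun i _ => by ring
    _ ≤ ∑ i, G.weight i * G.imbalance ^ 2 :=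
        sum_le_sum fun i _ =>
          mul_le_mul_of_nonneg_left (G.natCast_mul_weight_le i) (G.weight_pos i).le
    _ = G.imbalance ^ 2 := by rw [← sum_mul, G.sum_weight, one_mul]

lemma wdist_thresholdResponse_sq_le {ε : ℝ} (hε : 0 < ε) (t y z : Fin N → ℝ) :
    G.wdist (thresholdResponse t y) (thresholdResponse t z) ^ 2 ≤
      ∑ j, G.weight j * (Set.Ioc (y j - ε) (y j + ε)).indicator 1 (t j) +
        G.wdist z y ^ 2 / ε ^ 2 := by
  rw [wdist_sq, wdist_sq, sum_div, ← sum_add_distrib]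
  refine sum_le_sum fun j _ => ?_
  calc G.weight j * (thresholdResponse t y j - thresholdResponse t z j) ^ 2
      ≤ G.weight j * ((Set.Ioc (y j - ε) (y j + ε)).indicator 1 (t j) + (z j - y j) ^ 2 / ε ^ 2) :=
        mul_le_mul_of_nonneg_left (sq_ite_sub_ite_le_indicator_Ioc_add hε) (G.weight_pos j).le
    _ = _ := by ring

lemma sq_le_of_le_supResponseDist {a₀ t : Fin N → ℝ} {η δ ε : ℝ} (hη : 0 ≤ η) (hε : 0 < ε)
    (h : η ≤ G.supResponseDist a₀ δ t) :
    η ^ 2 ≤ ∑ j, G.weight j * (Set.Ioc (G.nbr a₀ j - ε) (G.nbr a₀ j + ε)).indicator 1 (t j) +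
      δ ^ 2 / ε ^ 2 := by
  set B := ∑ j, G.weight j * (Set.Ioc (G.nbr a₀ j - ε) (G.nbr a₀ j + ε)).indicator 1 (t j) +
    δ ^ 2 / ε ^ 2
  have hB : 0 ≤ B := add_nonneg (sum_nonneg fun j _ => mul_nonneg (G.weight_pos j).le
    (Set.indicator_nonneg (fun _ _ => zero_le_one) _)) (by positivity)
  have hsup : G.supResponseDist a₀ δ t ≤ √B := by
    refine Real.sSup_le ?_ (Real.sqrt_nonneg _)
    rintro r ⟨a, -, ha, rfl⟩
    refine Real.le_sqrt_of_sq_le ((G.wdist_thresholdResponse_sq_le hε t _ _).trans ?_)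
    exact add_le_add le_rfl (div_le_div_of_nonneg_right
      (pow_le_pow_left₀ (Real.sqrt_nonneg _) ha 2) (pow_pos hε 2).le)
  simpa [Real.sq_sqrt hB] using pow_le_pow_left₀ hη (h.trans hsup) 2

lemma sum_weight_mul_measureReal_Ioc_le [Nonempty (Fin N)] {μ : Measure ℝ} [IsFiniteMeasure μ]
    (hLip : LipschitzWith 1 (cdf μ)) (y : Fin N → ℝ) {ε : ℝ} (hε : 0 ≤ ε) :
    ∑ j, G.weight j * μ.real (Set.Ioc (y j - ε) (y j + ε)) ≤ 2 * ε :=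
  calc ∑ j, G.weight j * μ.real (Set.Ioc (y j - ε) (y j + ε)) ≤ ∑ j, G.weight j * (2 * ε) :=
        sum_le_sum fun j _ => mul_le_mul_of_nonneg_left
          ((measureReal_Ioc_le_of_lipschitzWith_cdf hLip (by linarith)).trans_eq (by ring))
          (G.weight_pos j).le
    _ = 2 * ε := by rw [← sum_mul, G.sum_weight, one_mul]

lemma exp_neg_two_mul_sq_div_sum_weight_sq_le [Nonempty (Fin N)] (s : ℝ) :
    Real.exp (-2 * s ^ 2 / ∑ j, G.weight j ^ 2) ≤
      Real.exp (-(N * s ^ 2 / (2 * G.imbalance ^ 4))) := by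
  have hV : 0 < ∑ j, G.weight j ^ 2 := sum_pos (fun j _ => pow_pos (G.weight_pos j) 2) univ_nonempty
  have hw := G.one_le_imbalance
  have hNV : N * ∑ j, G.weight j ^ 2 ≤ 4 * G.imbalance ^ 4 :=
    calc N * ∑ j, G.weight j ^ 2 ≤ G.imbalance ^ 2 := G.natCast_mul_sum_weight_sq_le
      _ ≤ 4 * G.imbalance ^ 4 := by nlinarith [one_le_pow₀ (n := 2) hw]
  rw [Real.exp_le_exp, neg_mul, neg_div, neg_le_neg_iff, div_le_div_iff₀ (by positivity) hV]
  nlinarith [mul_le_mul_of_nonneg_left hNV (sq_nonneg s)]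

end Network

theorem prob_bound_two_general (μ : Measure ℝ) [IsProbabilityMeasure μ]
    (hLip : LipschitzWith 1 (cdf μ)) (N : ℕ) (G : Network N)
    (a₀ : Fin N → ℝ)
    (η δ : ℝ) (hη : 0 < η) (hδ : 0 < δ) (h : 3 * δ ^ ((2 : ℝ) / 3) ≤ η ^ 2) :
    (Measure.pi fun _ : Fin N => μ)
        {t | η ≤ sSup {r : ℝ | ∃ a : Fin N → ℝ,
          (∀ i, a i ∈ Set.Icc (0 : ℝ) 1) ∧
          G.wdist (G.nbr a) (G.nbr a₀) ≤ δ ∧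
          r = G.wdist (fun j => if t j ≤ G.nbr a₀ j then 1 else 0)
                (fun j => if t j ≤ G.nbr a j then 1 else 0)}} ≤
      ENNReal.ofReal
        (Real.exp (-(N * (η ^ 2 - 3 * δ ^ ((2 : ℝ) / 3)) ^ 2 / (2 * G.imbalance ^ 4)))) := by
  rcases N.eq_zero_or_pos with rfl | hN
  · simp [prob_le_one]
  have : Nonempty (Fin N) := Fin.pos_iff_nonempty.1 hN
  change (Measure.pi fun _ : Fin N => μ) {t | η ≤ G.supResponseDist a₀ δ t} ≤ _
  set ε := δ ^ ((2 : ℝ) / 3)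
  have hε : 0 < ε := by positivity
  set A : Fin N → Set ℝ := fun j => Set.Ioc (G.nbr a₀ j - ε) (G.nbr a₀ j + ε)
  have hevent : {t | η ≤ G.supResponseDist a₀ δ t} ⊆
      {t | η ^ 2 - 3 * ε ≤ ∑ j, G.weight j * ((A j).indicator 1 (t j) - μ.real (A j))} := by
    intro t ht
    have hwindow := G.sq_le_of_le_supResponseDist hη.le hε ht
    have hmean := G.sum_weight_mul_measureReal_Ioc_le hLip (G.nbr a₀) hε.le
    rw [sq_div_sq_rpow_two_div_three hδ] at hwindow
    simp only [Set.mem_ofPred_eq, mul_sub, sum_sub_distrib]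
    linarith
  calc _ ≤ _ := measure_mono hevent
    _ = ENNReal.ofReal ((Measure.pi fun _ : Fin N => μ).real _) := (ofReal_measureReal).symm
    _ ≤ _ := ENNReal.ofReal_le_ofReal ((measureReal_sum_mul_indicator_sub_ge_le _
        (fun j => measurableSet_Ioc) (fun j => (G.weight_pos j).le) (by linarith)).trans
        (G.exp_neg_two_mul_sq_div_sum_weight_sq_le _))

/-- **Lemma: probability bound 2.** A uniform bound, over all profiles whose
neighborhood averages are `δ`-close to those of `a₀`, on the distance between the realized
best responses to `a₀` and to `a`. -/
theorem prob_bound_two (μ : Measure ℝ) [IsProbabilityMeasure μ]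
    (hLip : LipschitzWith 1 (cdf μ)) (N : ℕ) (G : Network N)
    (a₀ : Fin N → ℝ) (ha₀ : ∀ i, a₀ i ∈ Set.Icc (0 : ℝ) 1)
    (η δ : ℝ) (hη : 0 < η) (hδ : 0 < δ) (h : 3 * δ ^ ((2 : ℝ) / 3) ≤ η ^ 2) :
    (Measure.pi fun _ : Fin N => μ)
        {t | η ≤ sSup {r : ℝ | ∃ a : Fin N → ℝ,
          (∀ i, a i ∈ Set.Icc (0 : ℝ) 1) ∧
          G.wdist (G.nbr a) (G.nbr a₀) ≤ δ ∧
          r = G.wdist (fun j => if t j ≤ G.nbr a₀ j then 1 else 0)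
                (fun j => if t j ≤ G.nbr a j then 1 else 0)}} ≤
      ENNReal.ofReal
        (Real.exp (-(N * (η ^ 2 - 3 * δ ^ ((2 : ℝ) / 3)) ^ 2 / (2 * G.imbalance ^ 4)))) :=
  prob_bound_two_general μ hLip N G a₀ η δ hη hδ h
end

section
/- For every η > 0 there exists d > 0 with the following property. Let g be a network on N agents with d(g) ≤ d, let x* ∈ [0,1], and let A₁, …, A_N be independent random variables taking values in [0,1] with E[Aⱼ] = x* for every j. Define the random neighborhood averages βᵢ := (1/gᵢ)·Σ_j (g i j)·Aⱼ. Then Prob( Σᵢ gᵢ·|βᵢ − x*| > η·Σᵢ gᵢ ) < η. -/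
open MeasureTheory Finset

open MeasureTheory ProbabilityTheory

/-! Writing `cᵢⱼ = gᵢⱼ / gᵢ`, each `βᵢ - x*` is the centred sum `∑ⱼ cᵢⱼ (Aⱼ - x*)` of independent
variables, so its variance is `∑ⱼ cᵢⱼ² Var Aⱼ ≤ d(g) / 4`, because `∑ⱼ cᵢⱼ = 1` and `cᵢⱼ ≤ d(g)`.
By AM-GM the event `∑ᵢ gᵢ |βᵢ - x*| > η ∑ᵢ gᵢ` forces `∑ᵢ gᵢ (βᵢ - x*)² > η² ∑ᵢ gᵢ`, whose
probability Markov's inequality bounds by `d(g) / (4 η²)`; the choice `d = η³` makes this `< η`. -/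

theorem sq_mul_sum_lt_sum_mul_sq {ι : Type*} (s : Finset ι) {w x : ι → ℝ}
    (hw : ∀ i ∈ s, 0 ≤ w i) {η : ℝ} (hη : 0 < η)
    (h : η * ∑ i ∈ s, w i < ∑ i ∈ s, w i * |x i|) :
    η ^ 2 * ∑ i ∈ s, w i < ∑ i ∈ s, w i * x i ^ 2 := by
  have hamgm :
      2 * η * ∑ i ∈ s, w i * |x i| ≤ ∑ i ∈ s, w i * x i ^ 2 + η ^ 2 * ∑ i ∈ s, w i := by
    rw [mul_sum, mul_sum, ← sum_add_distrib]
    refine sum_le_sum fun i hi => ?_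
    have := two_mul_le_add_sq η |x i|
    rw [sq_abs] at this
    nlinarith [hw i hi]
  nlinarith

theorem measure_ge_le_ofReal_integral_div {α : Type*} [MeasurableSpace α] {μ : Measure α}
    [IsFiniteMeasure μ] {f : α → ℝ} (hf_nonneg : 0 ≤ᵐ[μ] f) (hf_int : Integrable f μ)
    {ε : ℝ} (hε : 0 < ε) :
    μ {x | ε ≤ f x} ≤ ENNReal.ofReal ((∫ x, f x ∂μ) / ε) := by
  rw [← ofReal_measureReal]
  refine ENNReal.ofReal_le_ofReal ((le_div_iff₀' hε).2 ?_)
  exact mul_meas_ge_le_integral_of_nonneg hf_nonneg hf_int ε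

section WeightedSum

variable {Ω ι : Type*} [MeasurableSpace Ω] {P : Measure Ω} [IsProbabilityMeasure P] [Fintype ι]
  {A : ι → Ω → ℝ} {a b : ℝ}

theorem memLp_weighted_sum (hA : ∀ j, Measurable (A j)) (hAab : ∀ j ω, A j ω ∈ Set.Icc a b)
    (c : ι → ℝ) : MemLp (fun ω ↦ ∑ j, c j * A j ω) 2 P :=
  memLp_finsetSum _ fun j _ =>
    (memLp_of_bounded (ae_of_all _ (hAab j)) (hA j).aestronglyMeasurable 2).const_mul (c j)

theorem variance_weighted_sum_le (hA : ∀ j, Measurable (A j)) (hind : iIndepFun A P)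
    (hAab : ∀ j ω, A j ω ∈ Set.Icc a b) (c : ι → ℝ) :
    Var[fun ω ↦ ∑ j, c j * A j ω; P] ≤ (∑ j, c j ^ 2) * ((b - a) / 2) ^ 2 := by
  set X : ι → Ω → ℝ := fun j ω ↦ c j * A j ω
  have hX : ∀ j, MemLp (X j) 2 P := fun j =>
    (memLp_of_bounded (ae_of_all _ (hAab j)) (hA j).aestronglyMeasurable 2).const_mul (c j)
  have hXindep : Set.Pairwise (univ : Finset ι) fun i j => X i ⟂ᵢ[P] X j :=
    fun i _ j _ hij => (hind.indepFun hij).comp (measurable_id.const_mul (c i))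
      (measurable_id.const_mul (c j))
  have hsum : (fun ω ↦ ∑ j, X j ω) = ∑ j, X j := by ext; simp only [Finset.sum_apply]
  rw [hsum, IndepFun.variance_sum (fun j _ => hX j) hXindep, sum_mul]
  refine sum_le_sum fun j _ => ?_
  rw [variance_const_mul]
  exact mul_le_mul_of_nonneg_left
    (variance_le_sq_of_bounded (ae_of_all _ (hAab j)) (hA j).aemeasurable) (sq_nonneg _)

theorem integral_sq_weighted_sum_sub_le (hA : ∀ j, Measurable (A j)) (hind : iIndepFun A P)
    (hAab : ∀ j ω, A j ω ∈ Set.Icc a b) {m : ℝ} (hmean : ∀ j, ∫ ω, A j ω ∂P = m) {c : ι → ℝ}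
    (hc : ∑ j, c j = 1) :
    ∫ ω, (∑ j, c j * A j ω - m) ^ 2 ∂P ≤ (∑ j, c j ^ 2) * ((b - a) / 2) ^ 2 := by
  have hAint : ∀ j, Integrable (A j) P := fun j =>
    (memLp_of_bounded (ae_of_all _ (hAab j)) (hA j).aestronglyMeasurable 1).integrable le_rfl
  have hmean_sum : ∫ ω, ∑ j, c j * A j ω ∂P = m := by
    rw [integral_finsetSum _ fun j _ => (hAint j).const_mul (c j)]
    simp only [integral_const_mul, hmean, ← sum_mul, hc, one_mul]
  rw [← hmean_sum, ← variance_eq_integral (memLp_weighted_sum hA hAab c).aemeasurable]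
  exact variance_weighted_sum_le hA hind hAab c

end WeightedSum

namespace Network

variable {N : ℕ} (G : Network N)

theorem sum_deg_pos [Nonempty (Fin N)] : 0 < ∑ i, G.deg i :=
  sum_pos (fun i _ => G.degPos i) univ_nonempty

theorem sum_g_div_deg (i : Fin N) : ∑ j, G.g i j / G.deg i = 1 := by
  rw [← sum_div]; exact div_self (G.degPos i).ne'

theorem g_div_deg_le_fineness (i j : Fin N) : G.g i j / G.deg i ≤ G.fineness :=
  (le_ciSup (Set.finite_range _).bddAbove j).trans
    (le_ciSup (f := fun i => ⨆ j, G.g i j / G.deg i) (Set.finite_range _).bddAbove i)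

theorem sum_sq_g_div_deg_le_fineness (i : Fin N) :
    ∑ j, (G.g i j / G.deg i) ^ 2 ≤ G.fineness := by
  calc ∑ j, (G.g i j / G.deg i) ^ 2 ≤ ∑ j, G.fineness * (G.g i j / G.deg i) := by
        refine sum_le_sum fun j _ => ?_
        rw [sq]
        exact mul_le_mul_of_nonneg_right (G.g_div_deg_le_fineness i j)
          (div_nonneg (G.nonneg i j) (G.degPos i).le)
    _ = G.fineness := by rw [← mul_sum, G.sum_g_div_deg, mul_one]

theorem nbr_eq_sum (a : Fin N → ℝ) (i : Fin N) : G.nbr a i = ∑ j, G.g i j / G.deg i * a j := by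
  simp only [nbr, sum_div, div_mul_eq_mul_div]

section Random

variable {Ω : Type*} [MeasurableSpace Ω] {P : Measure Ω} [IsProbabilityMeasure P]
  {A : Fin N → Ω → ℝ} {a b : ℝ}

theorem integrable_sq_nbr_sub (hA : ∀ j, Measurable (A j)) (hAab : ∀ j ω, A j ω ∈ Set.Icc a b)
    (i : Fin N) (m : ℝ) : Integrable (fun ω ↦ (G.nbr (A · ω) i - m) ^ 2) P := by
  simp only [G.nbr_eq_sum]
  exact ((memLp_weighted_sum hA hAab _).sub (memLp_const m)).integrable_sq

theorem integral_sq_nbr_sub_le (hA : ∀ j, Measurable (A j)) (hind : iIndepFun A P)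
    (hAab : ∀ j ω, A j ω ∈ Set.Icc a b) {m : ℝ} (hmean : ∀ j, ∫ ω, A j ω ∂P = m) (i : Fin N) :
    ∫ ω, (G.nbr (A · ω) i - m) ^ 2 ∂P ≤ G.fineness * ((b - a) / 2) ^ 2 := by
  simp only [G.nbr_eq_sum]
  exact (integral_sq_weighted_sum_sub_le hA hind hAab hmean (G.sum_g_div_deg i)).trans
    (mul_le_mul_of_nonneg_right (G.sum_sq_g_div_deg_le_fineness i) (sq_nonneg _))

theorem integral_sum_deg_mul_sq_nbr_sub_le (hA : ∀ j, Measurable (A j)) (hind : iIndepFun A P)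
    (hAab : ∀ j ω, A j ω ∈ Set.Icc a b) {m : ℝ} (hmean : ∀ j, ∫ ω, A j ω ∂P = m) :
    ∫ ω, ∑ i, G.deg i * (G.nbr (A · ω) i - m) ^ 2 ∂P
      ≤ G.fineness * ((b - a) / 2) ^ 2 * ∑ i, G.deg i := by
  rw [integral_finsetSum _ fun i _ => (G.integrable_sq_nbr_sub hA hAab i m).const_mul _, mul_sum]
  refine sum_le_sum fun i _ => ?_
  rw [integral_const_mul, mul_comm _ (G.deg i)]
  exact mul_le_mul_of_nonneg_left (G.integral_sq_nbr_sub_le hA hind hAab hmean i) (G.degPos i).le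

end Random

end Network

/-- **Lemma: neighborhood averages concentrate.** If the actions `Aⱼ` are
independent `[0,1]`-valued random variables with mean `x*`, then on any sufficiently fine
network the degree-weighted average deviation of the neighborhood averages from `x*`
exceeds `η` with probability less than `η`. -/
theorem neighborhood_average_concentration :
    ∀ η > (0 : ℝ), ∃ d > (0 : ℝ), ∀ (N : ℕ) (G : Network N), G.fineness ≤ d →
      ∀ xs : ℝ, xs ∈ Set.Icc (0 : ℝ) 1 →
      ∀ (Ω : Type) (mΩ : MeasurableSpace Ω) (P : Measure Ω),
        IsProbabilityMeasure P →
        ∀ A : Fin N → Ω → ℝ,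
          (∀ j, Measurable (A j)) →
          iIndepFun (m := fun _ : Fin N => Real.measurableSpace) A P →
          (∀ j ω, A j ω ∈ Set.Icc (0 : ℝ) 1) →
          (∀ j, ∫ ω, A j ω ∂P = xs) →
          P {ω | η * ∑ i, G.deg i <
              ∑ i, G.deg i * |(∑ j, G.g i j * A j ω) / G.deg i - xs|} <
            ENNReal.ofReal η := by
  intro η hη
  refine ⟨η ^ 3, by positivity, ?_⟩
  intro N G hfine xs _ Ω _ P _ A hA hind hA01 hmean
  obtain hN | hN := isEmpty_or_nonempty (Fin N)
  · simpa using hη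
  set D := ∑ i, G.deg i
  have hD : 0 < D := G.sum_deg_pos
  set T : Ω → ℝ := fun ω ↦ ∑ i, G.deg i * (G.nbr (A · ω) i - xs) ^ 2
  have hT_int : Integrable T P :=
    integrable_finsetSum _ fun i _ => (G.integrable_sq_nbr_sub hA hA01 i xs).const_mul _
  have hT_nonneg : 0 ≤ᵐ[P] T :=
    ae_of_all _ fun ω => sum_nonneg fun i _ => mul_nonneg (G.degPos i).le (sq_nonneg _)
  have hT_mean : ∫ ω, T ω ∂P ≤ η ^ 3 / 4 * D :=
    (G.integral_sum_deg_mul_sq_nbr_sub_le hA hind hA01 hmean).trans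
      (mul_le_mul_of_nonneg_right (by linarith) hD.le)
  calc _ ≤ P {ω | η ^ 2 * D ≤ T ω} := measure_mono fun ω hω =>
        (sq_mul_sum_lt_sum_mul_sq univ (fun i _ => (G.degPos i).le) hη hω).le
    _ ≤ ENNReal.ofReal ((∫ ω, T ω ∂P) / (η ^ 2 * D)) :=
        measure_ge_le_ofReal_integral_div hT_nonneg hT_int (by positivity)
    _ < ENNReal.ofReal η := by
        refine (ENNReal.ofReal_lt_ofReal_iff hη).2 ((div_lt_iff₀ (by positivity)).2 ?_)
        nlinarith [mul_pos (pow_pos hη 3) hD]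
end

section
/- Let g be a network on N agents and let t, t' : Fin N → ℝ be threshold profiles with t'ᵢ ≤ tᵢ for every i. Suppose a : Fin N → {0,1} is a pure equilibrium for t, i.e., for every i: aᵢ = 1 implies tᵢ ≤ βᵢ(a), and aᵢ = 0 implies tᵢ ≥ βᵢ(a). Then there exists a' : Fin N → {0,1} with aᵢ ≤ a'ᵢ for every i such that a' is an upper equilibrium for t', i.e., for every i: a'ᵢ = 1 ↔ t'ᵢ ≤ βᵢ(a'). -/
open MeasureTheory Finset

noncomputable def Network.indf {N : ℕ} (S : Set (Fin N)) : Fin N → ℝ := S.indicator 1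

lemma Network.indf_mem {N : ℕ} {S : Set (Fin N)} {i : Fin N} (h : i ∈ S) :
    Network.indf S i = 1 := Set.indicator_of_mem h 1

lemma Network.indf_notMem {N : ℕ} {S : Set (Fin N)} {i : Fin N} (h : i ∉ S) :
    Network.indf S i = 0 := Set.indicator_of_notMem h 1

lemma Network.nbr_mono {N : ℕ} (G : Network N) {b c : Fin N → ℝ} (h : ∀ j, b j ≤ c j)
    (i : Fin N) : G.nbr b i ≤ G.nbr c i := by
  unfold Network.nbr
  have hd : (0:ℝ) < G.deg i := G.degPos i
  gcongr with j _
  · exact G.nonneg i j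
  · exact h j

/-- A pure equilibrium for thresholds `t` is dominated by an upper
equilibrium for any pointwise-lower thresholds `t'`. -/
theorem exists_upper_eq_ge {N : ℕ} (G : Network N) (t t' : Fin N → ℝ)
    (ht : ∀ i, t' i ≤ t i) (a : Fin N → ℝ) (hpure : ∀ i, a i = 0 ∨ a i = 1)
    (heq : ∀ i, (a i = 1 → t i ≤ G.nbr a i) ∧ (a i = 0 → G.nbr a i ≤ t i)) :
    ∃ a' : Fin N → ℝ, (∀ i, a' i = 0 ∨ a' i = 1) ∧ (∀ i, a i ≤ a' i) ∧
      ∀ i, (a' i = 1 ↔ t' i ≤ G.nbr a' i) := by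
  classical
  set F : Set (Fin N) →o Set (Fin N) :=
    ⟨fun S => {i | t' i ≤ G.nbr (Network.indf S) i}, by
      intro S T hST i hi
      refine le_trans hi (G.nbr_mono ?_ i)
      intro j
      by_cases hj : j ∈ S
      · rw [Network.indf_mem hj, Network.indf_mem (hST hj)]
      · rw [Network.indf_notMem hj]
        by_cases hj' : j ∈ T
        · rw [Network.indf_mem hj']; norm_num
        · rw [Network.indf_notMem hj']⟩
  set L : Set (Fin N) := OrderHom.gfp F with hLdef
  have hfix : F L = L := OrderHom.map_gfp F
  have hS0 : {i | a i = 1} ≤ L := by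
    apply OrderHom.le_gfp
    intro i (hi : a i = 1)
    have hind : Network.indf {i | a i = 1} = a := by
      funext j
      rcases hpure j with h0 | h1
      · rw [h0]; exact Network.indf_notMem (by simp [h0])
      · rw [h1]; exact Network.indf_mem h1
    show t' i ≤ G.nbr (Network.indf {i | a i = 1}) i
    rw [hind]
    exact (ht i).trans ((heq i).1 hi)
  have hmem : ∀ i, Network.indf L i = 1 ↔ i ∈ L := by
    intro i
    by_cases hi : i ∈ L
    · simp [Network.indf_mem hi, hi]
    · simp [Network.indf_notMem hi, hi]
  refine ⟨Network.indf L, ?_, ?_, ?_⟩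
  · intro i
    by_cases hi : i ∈ L
    · exact Or.inr (Network.indf_mem hi)
    · exact Or.inl (Network.indf_notMem hi)
  · intro i
    rcases hpure i with h0 | h1
    · rw [h0]
      by_cases hi : i ∈ L
      · rw [Network.indf_mem hi]; norm_num
      · rw [Network.indf_notMem hi]
    · rw [h1, Network.indf_mem (hS0 h1)]
  · intro i
    rw [hmem i]
    constructor
    · intro hi
      rw [← hfix] at hi
      exact hi
    · intro hi
      have h2 : i ∈ F L := hi
      rw [hfix] at h2
      exact h2
end
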